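/- arXiv:2403.07272 — 4 statements merged into one kernel-verified Lean document; each statement's English description precedes it below -/
import Mathlib

section
/- Let Z ⊆ ℙ^n (n ≥ 2) be a Cayley-Bacharach set for O(d), let P ∈ ℙ^n \ Z, and let H ≅ ℙ^{n-1} be a hyperplane not containing P. Let π : ℙ^n \ {P} → H be the linear projection from P. If the scheme-theoretic image π(Z) is reduced, then π(Z) is Cayley-Bacharach for O(d) in H. -/
/-- Let `Z ⊆ ℙ^n` (n ≥ 2) be a Cayley-Bacharach set for `O(d)` (points are
given by nonzero, pairwise non-proportional vectors `Z i` in `F^{n+1}`), let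
`P = [0:⋯:0:1] ∉ Z` and let `H = {X_{n+1} = 0} ≅ ℙ^{n-1}` be a hyperplane not containing
`P`.  The projection `π` from `P` to `H` sends a vector to its first `n` coordinates.
If the image `π(Z)` is reduced (the projected vectors are nonzero and pairwise
non-proportional), then `π(Z)` is Cayley-Bacharach for `O(d)` in `H`. -/
theorem stmt_1 {F : Type*} [Field F] (n d : ℕ) (hn : 2 ≤ n)
    {ι : Type*} [Fintype ι] (Z : ι → (Fin (n + 1) → F))
    (hZ0 : ∀ i, Z i ≠ 0)
    (hZdist : ∀ i j, i ≠ j → ∀ c : F, c • Z j ≠ Z i)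
    (hCB : ∀ f : MvPolynomial (Fin (n + 1)) F, f.IsHomogeneous d →
      ∀ i, (∀ j, j ≠ i → MvPolynomial.eval (Z j) f = 0) → MvPolynomial.eval (Z i) f = 0)
    (hP : ∀ i, (fun k : Fin n => Z i k.castSucc) ≠ 0)
    (hred : ∀ i j, i ≠ j → ∀ c : F,
      (c • fun k : Fin n => Z j k.castSucc) ≠ (fun k : Fin n => Z i k.castSucc)) :
    ∀ f : MvPolynomial (Fin n) F, f.IsHomogeneous d →
      ∀ i, (∀ j, j ≠ i → MvPolynomial.eval (fun k : Fin n => Z j k.castSucc) f = 0) →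
        MvPolynomial.eval (fun k : Fin n => Z i k.castSucc) f = 0 := by
  intro f hf i hj
  have key : ∀ j, MvPolynomial.eval (Z j)
      (MvPolynomial.rename Fin.castSucc f)
      = MvPolynomial.eval (fun k : Fin n => Z j k.castSucc) f := by
    intro j; rw [MvPolynomial.eval_rename]; rfl
  rw [← key]
  exact hCB _ (hf.rename_isHomogeneous) i (fun j hji => by rw [key]; exact hj j hji)
end

section
/- Let Z ⊆ ℙ^n be a reduced zero-dimensional subscheme such that the restriction map H^0(ℙ^n, O(d)) → H^0(Z, O(d)) is not surjective. Then Z contains a subset Z' that is Cayley-Bacharach for O(d). -/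
/-!
Take `Z' ⊆ Z` minimal among the subsets on which restriction of degree-`d` forms is not
surjective; it is nonempty since restriction to `∅` is trivially surjective. If `Z'` failed
Cayley-Bacharach, some form `f` would vanish on `Z' \ {z}` but not at `z`. Restriction to
`Z' \ {z}` is surjective by minimality, and adding a multiple of `f` to an interpolating form
corrects its value at `z` without disturbing the others, so restriction to `Z'` would be
surjective after all.
-/

/-- A finite reduced set `Z` of points of `ℙ^n` (given by vectors in `F^{n+1}`) is
Cayley-Bacharach for `O(d)`: every homogeneous form of degree `d` vanishing on all but
one point of `Z` vanishes on all of `Z`. -/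
def IsCB (F : Type*) [Field F] (n d : ℕ) (Z : Finset (Fin (n + 1) → F)) : Prop :=
  ∀ f : MvPolynomial (Fin (n + 1)) F, f.IsHomogeneous d →
    ∀ z ∈ Z, (∀ w ∈ Z, w ≠ z → MvPolynomial.eval w f = 0) → MvPolynomial.eval z f = 0

open MvPolynomial

section

variable {F : Type*} [Field F] {n d : ℕ}

variable (F n d) in
noncomputable def evalOnPoints (Z : Finset (Fin (n + 1) → F)) :
    homogeneousSubmodule (Fin (n + 1)) F d → (Z → F) :=
  fun f z => eval (z : Fin (n + 1) → F) (f : MvPolynomial (Fin (n + 1)) F)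

theorem evalOnPoints_empty_surjective : Function.Surjective (evalOnPoints F n d ∅) :=
  fun _ => ⟨0, Subsingleton.elim _ _⟩

theorem evalOnPoints_surjective_of_erase [DecidableEq F] {Z : Finset (Fin (n + 1) → F)}
    {f : MvPolynomial (Fin (n + 1)) F} (hf : f.IsHomogeneous d) {z : Fin (n + 1) → F}
    (hz : z ∈ Z) (hvan : ∀ w ∈ Z, w ≠ z → eval w f = 0) (hfz : eval z f ≠ 0)
    (hs : Function.Surjective (evalOnPoints F n d (Z.erase z))) :
    Function.Surjective (evalOnPoints F n d Z) := by
  intro t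
  obtain ⟨g, hg⟩ := hs fun w => t ⟨w, Finset.mem_of_mem_erase w.2⟩
  let c : F := (t ⟨z, hz⟩ - eval z (g : MvPolynomial (Fin (n + 1)) F)) / eval z f
  refine ⟨g + c • ⟨f, (mem_homogeneousSubmodule d f).mpr hf⟩, funext fun w => ?_⟩
  simp only [evalOnPoints, Submodule.coe_add, SetLike.val_smul, smul_eq_C_mul, map_add,
    map_mul, eval_C]
  by_cases hw : (w : Fin (n + 1) → F) = z
  · obtain rfl : w = ⟨z, hz⟩ := Subtype.ext hw
    simp only [c]
    field_simp
    ring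
  · rw [hvan w w.2 hw, mul_zero, add_zero]
    exact congrFun hg ⟨w, Finset.mem_erase.mpr ⟨hw, w.2⟩⟩

theorem isCB_of_minimal_not_surjective [DecidableEq F] {Z : Finset (Fin (n + 1) → F)}
    (hmin : Minimal (fun Z => ¬ Function.Surjective (evalOnPoints F n d Z)) Z) :
    IsCB F n d Z := by
  intro f hf z hz hvan
  by_contra hfz
  exact hmin.prop <| evalOnPoints_surjective_of_erase hf hz hvan hfz <|
    not_not.mp <| hmin.not_prop_of_lt (Finset.erase_ssubset hz)

theorem exists_isCB_subset_of_not_surjective {Z : Finset (Fin (n + 1) → F)}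
    (hns : ¬ Function.Surjective (evalOnPoints F n d Z)) :
    ∃ Z' ⊆ Z, Z'.Nonempty ∧ IsCB F n d Z' := by
  classical
  obtain ⟨Z', hZ'Z, hmin⟩ :=
    exists_minimal_le_of_wellFoundedLT (fun Z => ¬ (evalOnPoints F n d Z).Surjective) Z hns
  refine ⟨Z', hZ'Z, Finset.nonempty_iff_ne_empty.mpr ?_, isCB_of_minimal_not_surjective hmin⟩
  rintro rfl
  exact hmin.prop evalOnPoints_empty_surjective

end

theorem stmt_3_general {F : Type*} [Field F] (n d : ℕ)
    (Z : Finset (Fin (n + 1) → F))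
    (hns : ¬ Function.Surjective
      (fun f : MvPolynomial.homogeneousSubmodule (Fin (n + 1)) F d =>
        fun z : {x // x ∈ Z} =>
          MvPolynomial.eval (z : Fin (n + 1) → F) (f : MvPolynomial (Fin (n + 1)) F))) :
    ∃ Z' : Finset (Fin (n + 1) → F), Z' ⊆ Z ∧ Z'.Nonempty ∧ IsCB F n d Z' :=
  exists_isCB_subset_of_not_surjective hns

/-- over an algebraically closed field, if the restriction map
`H^0(ℙ^n, O(d)) → H^0(Z, O(d))` (evaluation of degree-`d` forms at the points of `Z`)
is not surjective, then `Z` contains a nonempty subset `Z'` that is Cayley-Bacharach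
for `O(d)`. -/
theorem stmt_3 {F : Type*} [Field F] [IsAlgClosed F] (n d : ℕ)
    (Z : Finset (Fin (n + 1) → F))
    (hZ0 : ∀ z ∈ Z, z ≠ 0)
    (hZd : ∀ z ∈ Z, ∀ w ∈ Z, z ≠ w → ∀ c : F, c • z ≠ w)
    (hns : ¬ Function.Surjective
      (fun f : MvPolynomial.homogeneousSubmodule (Fin (n + 1)) F d =>
        fun z : {x // x ∈ Z} =>
          MvPolynomial.eval (z : Fin (n + 1) → F) (f : MvPolynomial (Fin (n + 1)) F))) :
    ∃ Z' : Finset (Fin (n + 1) → F), Z' ⊆ Z ∧ Z'.Nonempty ∧ IsCB F n d Z' :=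
  stmt_3_general n d Z hns
end

section
/- Let m, n ≥ 0 with m ≤ n, and let Z = {P_0, ..., P_m, P} ⊆ ℙ^n where P_i = [0:...:0:1:0:...:0] (1 in position i+1) and P = [1:x:0:...:0] lies in the linear span of P_0,...,P_m. Let d ≥ 3. Then the conditions that a degree-d form f vanish to second order at each P_i and have all first partial derivatives vanish at P impose (m+1)(n+1) + n − 1 linearly independent linear conditions on H^0(ℙ^n, O(d)). -/
/-!
Pair the conditions with test forms of degree `d`. At the coordinate point `P_i`, the value and the
derivatives `∂_k` (`k ≠ i`) are dual to the monomials `X_i^d` and `X_k X_i^{d-1}`. For `c ≥ 2`, the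
derivative `∂_c` at `P` takes the value `x` on `X_c X_1 X_0^{d-2}` and vanishes on the test forms of
the other `∂_{c'}`, while `X_c X_1 X_0^{d-2}` vanishes to second order at every `P_i` because
`d ≥ 3`. The pairing matrix is thus block lower-triangular with invertible diagonal blocks, so these
`(m+1)(n+1) + (n-1)` conditions are linearly independent.
-/

open Module MvPolynomial Submodule

theorem linearIndependent_sum_elim_of_blockTriangular {R M ι κ : Type*} [CommRing R]
    [NoZeroDivisors R] [AddCommGroup M] [Module R M] [Fintype ι] [Fintype κ]
    (f : ι → Dual R M) (g : κ → Dual R M) (v : ι → M) (w : κ → M)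
    (hfv : Pairwise fun i j ↦ f i (v j) = 0) (hfv' : ∀ i, f i (v i) ≠ 0)
    (hfw : ∀ i k, f i (w k) = 0)
    (hgw : Pairwise fun k l ↦ g k (w l) = 0) (hgw' : ∀ k, g k (w k) ≠ 0) :
    LinearIndependent R (Sum.elim f g) := by
  rw [Fintype.linearIndependent_iff]
  intro a ha
  have hev (u : M) : ∑ i, a (.inl i) * f i u + ∑ k, a (.inr k) * g k u = 0 := by
    simpa [Fintype.sum_sum_type] using congr($ha u)
  have hg (l : κ) : a (.inr l) = 0 := by
    have := hev (w l)
    rw [Fintype.sum_eq_single l fun k hk ↦ by rw [hgw hk, mul_zero]] at this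
    simp only [hfw, mul_zero, Finset.sum_const_zero, zero_add] at this
    exact (mul_eq_zero.mp this).resolve_right (hgw' l)
  rintro (j | l)
  · have := hev (v j)
    rw [Fintype.sum_eq_single j fun i hi ↦ by rw [hfv hi, mul_zero]] at this
    simp only [hg, zero_mul, Finset.sum_const_zero, add_zero] at this
    exact (mul_eq_zero.mp this).resolve_right (hfv' j)
  · exact hg l

theorem LinearIndependent.card_le_finrank_span {K M ι : Type*} [DivisionRing K]
    [AddCommGroup M] [Module K M] [Fintype ι] {φ : ι → M} (hφ : LinearIndependent K φ)
    {S : Set M} (hS : S.Finite) (hφS : ∀ i, φ i ∈ S) :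
    Fintype.card ι ≤ finrank K (span K S) :=
  have := FiniteDimensional.span_of_finite K hS
  (finrank_span_eq_card hφ).symm.le.trans
    (Submodule.finrank_mono (span_mono (Set.range_subset_iff.mpr hφS)))

section

variable {R σ : Type*} [CommRing R]

theorem X_mul_X_pow_mem_homogeneousSubmodule (k b : σ) (e : ℕ) :
    (X k * X b ^ e : MvPolynomial σ R) ∈ homogeneousSubmodule σ R (e + 1) := by
  rw [mem_homogeneousSubmodule, add_comm]
  simpa using (isHomogeneous_X R k).mul ((isHomogeneous_X R b).pow e)

theorem X_mul_X_mul_X_pow_mem_homogeneousSubmodule (c b z : σ) (e : ℕ) :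
    (X c * X b * X z ^ e : MvPolynomial σ R) ∈ homogeneousSubmodule σ R (e + 2) := by
  rw [mem_homogeneousSubmodule, add_comm]
  simpa using ((isHomogeneous_X R c).mul (isHomogeneous_X R b)).mul ((isHomogeneous_X R z).pow e)

variable [DecidableEq σ]

theorem aeval_single_X_mul_X_pow {e : ℕ} (he : e ≠ 0) (a k b : σ) :
    aeval (Pi.single a (1 : R)) (X k * X b ^ e : MvPolynomial σ R) =
      if k = a ∧ b = a then 1 else 0 := by
  simp only [map_mul, map_pow, aeval_X, Pi.single_apply, ite_pow, one_pow, zero_pow he]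
  split_ifs <;> simp_all

theorem aeval_single_pderiv_X_mul_X_pow {e : ℕ} (he : 2 ≤ e) {a j : σ} (hja : j ≠ a) (k b : σ) :
    aeval (Pi.single a (1 : R)) (pderiv j (X k * X b ^ e : MvPolynomial σ R)) =
      if k = j ∧ b = a then 1 else 0 := by
  have he₀ : e ≠ 0 := by omega
  have he₁ : e - 1 ≠ 0 := by omega
  simp [Pi.single_apply, apply_ite (eval _)]
  split_ifs <;> simp_all

theorem aeval_single_X_mul_X_mul_X_pow_eq_zero {c b : σ} (hcb : c ≠ b) (a z : σ) (e : ℕ) :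
    aeval (Pi.single a (1 : R)) (X c * X b * X z ^ e : MvPolynomial σ R) = 0 := by
  simp [Pi.single_apply]
  split_ifs <;> simp_all

theorem aeval_single_pderiv_X_mul_X_mul_X_pow_eq_zero {c b z : σ} (hcb : c ≠ b) (hcz : c ≠ z)
    (hbz : b ≠ z) {e : ℕ} (he : e ≠ 0) (a j : σ) :
    aeval (Pi.single a (1 : R)) (pderiv j (X c * X b * X z ^ e : MvPolynomial σ R)) = 0 := by
  simp [Pi.single_apply, apply_ite (eval _)]
  split_ifs <;> simp_all

theorem aeval_pderiv_X_mul_X_mul_X_pow_of_eq_zero {w : σ → R} {c : σ} (hc : w c = 0)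
    (b z j : σ) (e : ℕ) :
    aeval w (pderiv j (X c * X b * X z ^ e : MvPolynomial σ R)) =
      if c = j then w b * w z ^ e else 0 := by
  simp [hc]
  split_ifs <;> simp_all [mul_comm]

end

noncomputable section

variable {R σ : Type*} [CommRing R] (d : ℕ)

def homogeneousEval (p : σ → R) : Dual R (homogeneousSubmodule σ R d) :=
  (aeval p).toLinearMap.comp (Submodule.subtype _)

def homogeneousPderivEval (p : σ → R) (k : σ) : Dual R (homogeneousSubmodule σ R d) :=
  ((aeval p).toLinearMap.comp (pderiv k).toLinearMap).comp (Submodule.subtype _)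

@[simp]
theorem homogeneousEval_apply (p : σ → R) (f : homogeneousSubmodule σ R d) :
    homogeneousEval d p f = aeval p (f : MvPolynomial σ R) := rfl

@[simp]
theorem homogeneousPderivEval_apply (p : σ → R) (k : σ) (f : homogeneousSubmodule σ R d) :
    homogeneousPderivEval d p k f = aeval p (pderiv k (f : MvPolynomial σ R)) := rfl

/-- By Euler's formula `∂_a f (a) = d • f (a)` at the coordinate point `a`, so the value at `a` takes
the place of the derivative in the direction `a`, which is useless when the characteristic divides
`d`. -/
def secondOrderCondition [DecidableEq σ] (a k : σ) : Dual R (homogeneousSubmodule σ R d) :=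
  if k = a then homogeneousEval d (Pi.single a 1) else homogeneousPderivEval d (Pi.single a 1) k

variable {d} [DecidableEq σ]

theorem secondOrderCondition_apply_X_mul_X_pow (e : ℕ) (a k k' b : σ) :
    secondOrderCondition (e + 3) a k
        ⟨X k' * X b ^ (e + 2), X_mul_X_pow_mem_homogeneousSubmodule k' b (e + 2)⟩ =
      (if k' = k ∧ b = a then 1 else 0 : R) := by
  by_cases hka : k = a
  · subst hka
    rw [secondOrderCondition, if_pos rfl, homogeneousEval_apply]
    exact aeval_single_X_mul_X_pow (by omega) _ _ _
  · rw [secondOrderCondition, if_neg hka, homogeneousPderivEval_apply]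
    exact aeval_single_pderiv_X_mul_X_pow (by omega) hka _ _

theorem secondOrderCondition_apply_X_mul_X_mul_X_pow {c b z : σ} (hcb : c ≠ b) (hcz : c ≠ z)
    (hbz : b ≠ z) (e : ℕ) (a k : σ) :
    secondOrderCondition (e + 3) a k
      ⟨X c * X b * X z ^ (e + 1), X_mul_X_mul_X_pow_mem_homogeneousSubmodule c b z (e + 1)⟩ =
      (0 : R) := by
  by_cases hka : k = a
  · rw [secondOrderCondition, if_pos hka, homogeneousEval_apply]
    exact aeval_single_X_mul_X_mul_X_pow_eq_zero hcb _ _ _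
  · rw [secondOrderCondition, if_neg hka, homogeneousPderivEval_apply]
    exact aeval_single_pderiv_X_mul_X_mul_X_pow_eq_zero hcb hcz hbz (by omega) _ _

theorem linearIndependent_secondOrderCondition_sum_homogeneousPderivEval [IsDomain R]
    {m n : ℕ} (hmn : m ≤ n) (e : ℕ) {p : Fin (n + 1) → R}
    (hp : ∀ j : Fin (n + 1), 2 ≤ (j : ℕ) → p j = 0) (hp₀ : p 0 ≠ 0) (hp₁ : p 1 ≠ 0) :
    LinearIndependent R (Sum.elim
      (fun ik : Fin (m + 1) × Fin (n + 1) ↦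
        secondOrderCondition (e + 3) (Fin.castLE (by omega) ik.1) ik.2)
      (fun c : Fin (n - 1) ↦ homogeneousPderivEval (e + 3) p ⟨c + 2, by omega⟩)) := by
  refine linearIndependent_sum_elim_of_blockTriangular _ _
    (fun ik ↦ ⟨X ik.2 * X (Fin.castLE (by omega) ik.1) ^ (e + 2),
      X_mul_X_pow_mem_homogeneousSubmodule _ _ _⟩)
    (fun c ↦ ⟨X ⟨c + 2, by omega⟩ * X 1 * X 0 ^ (e + 1),
      X_mul_X_mul_X_pow_mem_homogeneousSubmodule _ _ _ _⟩) ?_ ?_ ?_ ?_ ?_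
  · rintro ⟨i, k⟩ ⟨i', k'⟩ hne
    rw [secondOrderCondition_apply_X_mul_X_pow, if_neg]
    rintro ⟨rfl, h⟩
    exact hne (Prod.ext (Fin.castLE_inj.mp h).symm rfl)
  · rintro ⟨i, k⟩
    simp [secondOrderCondition_apply_X_mul_X_pow]
  · rintro ⟨i, k⟩ c
    have h₁ : 1 % (n + 1) = 1 := Nat.one_mod_eq_one.mpr (by have := c.isLt; omega)
    apply secondOrderCondition_apply_X_mul_X_mul_X_pow <;> simp [Fin.ext_iff, h₁]
  · intro c c' hne
    simp only [homogeneousPderivEval_apply]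
    rw [aeval_pderiv_X_mul_X_mul_X_pow_of_eq_zero (hp _ (by simp)), if_neg]
    simpa [Fin.ext_iff] using hne.symm
  · intro c
    simp only [homogeneousPderivEval_apply]
    rw [aeval_pderiv_X_mul_X_mul_X_pow_of_eq_zero (hp _ (by simp)), if_pos rfl]
    exact mul_ne_zero hp₁ (pow_ne_zero _ hp₀)

end

theorem stmt_11_general {F : Type*} [Field F] (m n d : ℕ) (hmn : m ≤ n) (hd : 3 ≤ d)
    (x : F) (hx : x ≠ 0)
    (E : Fin (m + 1) → (Fin (n + 1) → F))
    (hE : ∀ i, E i = fun j : Fin (n + 1) => if (j : ℕ) = (i : ℕ) then (1 : F) else 0)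
    (P : Fin (n + 1) → F)
    (hP : P = fun j : Fin (n + 1) => if (j : ℕ) = 0 then (1 : F) else if (j : ℕ) = 1 then x else 0) :
    (m + 1) * (n + 1) + n - 1 ≤
      Module.finrank F (Submodule.span F
        ((Set.range fun i : Fin (m + 1) =>
            (MvPolynomial.aeval (E i)).toLinearMap.comp
              (Submodule.subtype (MvPolynomial.homogeneousSubmodule (Fin (n + 1)) F d))) ∪
         (Set.range fun ik : Fin (m + 1) × Fin (n + 1) =>
            ((MvPolynomial.aeval (E ik.1)).toLinearMap.comp
                (MvPolynomial.pderiv ik.2).toLinearMap).comp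
              (Submodule.subtype (MvPolynomial.homogeneousSubmodule (Fin (n + 1)) F d))) ∪
         (Set.range fun k : Fin (n + 1) =>
            ((MvPolynomial.aeval P).toLinearMap.comp
                (MvPolynomial.pderiv k).toLinearMap).comp
              (Submodule.subtype (MvPolynomial.homogeneousSubmodule (Fin (n + 1)) F d))))) := by
  obtain ⟨e, rfl⟩ : ∃ e, d = e + 3 := ⟨d - 3, by omega⟩
  obtain rfl : E = fun i ↦ Pi.single (Fin.castLE (by omega) i) 1 := by
    ext i j
    simp [hE, Pi.single_apply, Fin.ext_iff]
  have hP₁ : P 1 ≠ 0 := by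
    simp only [hP]
    split_ifs <;> simp_all
  have hP₂ (j : Fin (n + 1)) (hj : 2 ≤ (j : ℕ)) : P j = 0 := by
    simp only [hP]
    rw [if_neg (by omega), if_neg (by omega)]
  have hli := linearIndependent_secondOrderCondition_sum_homogeneousPderivEval hmn e hP₂
    (by simp [hP]) hP₁
  refine le_trans ?_ (hli.card_le_finrank_span
    (((Set.finite_range _).union (Set.finite_range _)).union (Set.finite_range _)) ?_)
  · simp only [Fintype.card_sum, Fintype.card_prod, Fintype.card_fin]
    omega
  · rintro (⟨i, k⟩ | c)
    · by_cases hk : k = Fin.castLE (by omega) i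
      · exact Or.inl (Or.inl ⟨i, by rw [Sum.elim_inl, secondOrderCondition, if_pos hk]; rfl⟩)
      · exact Or.inl (Or.inr ⟨(i, k), by rw [Sum.elim_inl, secondOrderCondition, if_neg hk]; rfl⟩)
    · exact Or.inr ⟨_, rfl⟩

/-- Let `m ≤ n`, `d ≥ 3`, let `P_i = [0:⋯:0:1:0:⋯:0]` (for `0 ≤ i ≤ m`)
be coordinate points of `ℙ^n` and let `P = [1:x:0:⋯:0]` (with `x ≠ 0`, so that `P` is
distinct from the `P_i`) lie in the linear span of `P_0, …, P_m`.  Then the conditions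
that a degree-`d` form vanish to second order at each `P_i` (value and all first
partials) and have all first partial derivatives vanish at `P` impose
`(m+1)(n+1) + n − 1` linearly independent linear conditions on `H^0(ℙ^n, O(d))`:
the span of the corresponding linear functionals has dimension at least
`(m+1)(n+1) + n − 1`. -/
theorem stmt_11 {F : Type*} [Field F] (m n d : ℕ) (hmn : m ≤ n) (hd : 3 ≤ d)
    (x : F) (hx : x ≠ 0)
    (E : Fin (m + 1) → (Fin (n + 1) → F))
    (hE : ∀ i, E i = fun j : Fin (n + 1) => if (j : ℕ) = (i : ℕ) then (1 : F) else 0)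
    (P : Fin (n + 1) → F)
    (hP : P = fun j : Fin (n + 1) => if (j : ℕ) = 0 then (1 : F) else if (j : ℕ) = 1 then x else 0)
    (hspan : P ∈ Submodule.span F (Set.range E)) :
    (m + 1) * (n + 1) + n - 1 ≤
      Module.finrank F (Submodule.span F
        ((Set.range fun i : Fin (m + 1) =>
            (MvPolynomial.aeval (E i)).toLinearMap.comp
              (Submodule.subtype (MvPolynomial.homogeneousSubmodule (Fin (n + 1)) F d))) ∪
         (Set.range fun ik : Fin (m + 1) × Fin (n + 1) =>
            ((MvPolynomial.aeval (E ik.1)).toLinearMap.comp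
                (MvPolynomial.pderiv ik.2).toLinearMap).comp
              (Submodule.subtype (MvPolynomial.homogeneousSubmodule (Fin (n + 1)) F d))) ∪
         (Set.range fun k : Fin (n + 1) =>
            ((MvPolynomial.aeval P).toLinearMap.comp
                (MvPolynomial.pderiv k).toLinearMap).comp
              (Submodule.subtype (MvPolynomial.homogeneousSubmodule (Fin (n + 1)) F d))))) :=
  stmt_11_general m n d hmn hd x hx E hE P hP
end

section
/- Let n, m ≥ 0 and d ≥ 3. Let Z ⊆ ℙ^n be a reduced zero-dimensional subscheme with |Z| ≥ m + 2 whose projective hull is m-dimensional. Then the kernel of the restriction map H^0(ℙ^n, O(d)) → H^0(N(Z), O(d)) has codimension at least (m+1)(n+1) + n − 1 in H^0(ℙ^n, O(d)). -/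
/-- The 1-jet of a polynomial at a point `z`: its value and all first partial
derivatives at `z`. -/
noncomputable def jetL (F : Type*) [Field F] (n : ℕ) (z : Fin (n + 1) → F) :
    MvPolynomial (Fin (n + 1)) F →ₗ[F] F × (Fin (n + 1) → F) :=
  LinearMap.prod (MvPolynomial.aeval z).toLinearMap
    (LinearMap.pi fun k =>
      (MvPolynomial.aeval z).toLinearMap.comp (MvPolynomial.pderiv k).toLinearMap)

/-- The restriction map `H^0(ℙ^n, O(d)) → H^0(N(Z), O(d))` to the first infinitesimal
neighbourhood of a finite reduced set of points `Z`, given by 1-jets; its kernel is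
`H^0(ℙ^n, I_Z^2(d))`. -/
noncomputable def jetMap (F : Type*) [Field F] (n d : ℕ)
    (Z : Finset (Fin (n + 1) → F)) :
    ↥(MvPolynomial.homogeneousSubmodule (Fin (n + 1)) F d) →ₗ[F]
      ({x // x ∈ Z} → F × (Fin (n + 1) → F)) :=
  LinearMap.pi fun w => (jetL F n (w : Fin (n + 1) → F)).comp (Submodule.subtype _)

/-!
Choose points of `Z` forming a basis of its span, extend them to a basis `B` of `F^{n+1}` with
dual coordinate forms `L j`, and pick a further point `w ∈ Z`. As the points of `Z` are pairwise
non-proportional, `w` has two nonzero coordinates `a ≠ b`. The `(m+1)(n+1)` forms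
`L p ^ (d-1) * L k` (`B p ∈ Z`) have 1-jets at the points `B p` forming a unit matrix, while
the `n-1` forms `L a ^ (d-2) * L b * L j` (`j ≠ a, b`) vanish to second order at every `B p`
(this is where `d ≥ 3` enters) and their derivatives at `w` along `B k` are
`δ_{jk} (L a w)^(d-2) (L b w)`.
By this block-triangular pattern the 1-jets of all these forms are linearly independent.
-/

open MvPolynomial

universe u

theorem Fintype.card_subtype_ne_and_ne {ι : Type*} [Fintype ι] [DecidableEq ι] {a b : ι}
    (hab : a ≠ b) : Fintype.card {j // j ≠ a ∧ j ≠ b} = Fintype.card ι - 2 := by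
  rw [Fintype.card_subtype, ← Finset.card_pair hab, ← Finset.card_compl]
  congr 1
  ext
  simp

section LinearAlgebra

variable {K : Type*} {V : Type u} {W : Type*} [Field K] [AddCommGroup V] [Module K V]
  [AddCommGroup W] [Module K W]

theorem linearIndependent_of_triangular {ι β : Type*} [LinearOrder β] {v : ι → V}
    (φ : ι → V →ₗ[K] K) (level : ι → β) (hdiag : ∀ i, φ i (v i) ≠ 0)
    (htri : ∀ i j, i ≠ j → level i ≤ level j → φ i (v j) = 0) :
    LinearIndependent K v := by
  classical
  rw [linearIndependent_iff]
  intro l hl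
  by_contra hl0
  obtain ⟨i, hi, hmin⟩ :=
    l.support.exists_min_image level (Finsupp.support_nonempty_iff.mpr hl0)
  have hφ : φ i (Finsupp.linearCombination K v l) = l i * φ i (v i) := by
    rw [Finsupp.linearCombination_apply, Finsupp.sum, map_sum,
      Finset.sum_eq_single_of_mem i hi fun j hj hji => by
        rw [map_smul, htri i j (Ne.symm hji) (hmin j hj), smul_zero], map_smul, smul_eq_mul]
  rw [hl, map_zero, eq_comm] at hφ
  exact mul_ne_zero (Finsupp.mem_support_iff.mp hi) (hdiag i) hφ

theorem LinearMap.card_le_finrank_quotient_ker [FiniteDimensional K W] (T : V →ₗ[K] W)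
    {ι : Type*} [Fintype ι] {u : ι → V} (hu : LinearIndependent K (T ∘ u)) :
    Fintype.card ι ≤ Module.finrank K (V ⧸ LinearMap.ker T) := by
  have hu' : LinearIndependent K fun i => (⟨T (u i), u i, rfl⟩ : LinearMap.range T) :=
    LinearIndependent.of_comp (LinearMap.range T).subtype hu
  rw [T.quotKerEquivRange.finrank_eq]
  exact hu'.fintype_card_le_finrank

theorem Module.Basis.finrank_span_image_finset {ι : Type*} (B : Module.Basis ι K V)
    (S : Finset ι) : Module.finrank K (Submodule.span K (B '' S)) = S.card := by
  have hrange : Set.range (B ∘ ((↑) : S → ι)) = B '' S := by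
    rw [Set.range_comp, Subtype.range_coe]
  rw [← hrange, finrank_span_eq_card (B.linearIndependent.comp _ Subtype.val_injective),
    Fintype.card_coe]

theorem Finset.exists_basis_image_subset_spanning [FiniteDimensional K V] (Z : Finset V) :
    ∃ (ι : Type u) (_ : Fintype ι) (B : Module.Basis ι K V) (S : Finset ι),
      (∀ i ∈ S, B i ∈ Z) ∧ S.card = Module.finrank K (Submodule.span K (Z : Set V)) ∧
        ∀ z ∈ Z, z ∈ Submodule.span K (B '' S) := by
  classical
  obtain ⟨s, hsZ, hspan, hsli⟩ := exists_linearIndependent K (Z : Set V)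
  have hs : LinearIndepOn K id s := hsli
  let B := Module.Basis.extend hs
  let S : Finset (hs.extend (Set.subset_univ s)) := Finset.univ.filter fun j => (j : V) ∈ s
  have hBS : B '' S = s := by
    ext x
    simpa [B, S] using fun hx => hs.subset_extend _ hx
  refine ⟨_, FiniteDimensional.fintypeBasisIndex B, B, S, fun i hi => hsZ ?_, ?_, ?_⟩
  · simpa [B, S] using hi
  · rw [← B.finrank_span_image_finset, hBS, hspan]
  · rw [hBS, hspan]
    exact fun z hz => Submodule.subset_span hz

theorem Module.Basis.exists_pair_repr_ne_zero {ι : Type*} (B : Module.Basis ι K V) {S : Set ι}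
    (hS : S.Nonempty) {w : V} (hw : w ∈ Submodule.span K (B '' S))
    (hne : ∀ j ∈ S, ∀ c : K, c • B j ≠ w) :
    ∃ a b, a ≠ b ∧ B.repr w a ≠ 0 ∧ B.repr w b ≠ 0 := by
  by_contra! h
  obtain ⟨j, hjS, hsupp⟩ : ∃ j ∈ S, (B.repr w).support ⊆ {j} := by
    rcases (B.repr w).support.eq_empty_or_nonempty with h0 | ⟨j, hj⟩
    · exact ⟨hS.some, hS.some_mem, by simp [h0]⟩
    refine ⟨j, B.mem_span_image.mp hw hj, fun i hi => Finset.mem_singleton.mpr ?_⟩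
    by_contra hij
    exact Finsupp.mem_support_iff.mp hi (h j i (Ne.symm hij) (Finsupp.mem_support_iff.mp hj))
  obtain ⟨c, hc⟩ := Finsupp.support_subset_singleton'.mp hsupp
  exact hne j hjS c (by rw [← B.repr_symm_single, ← hc, LinearEquiv.symm_apply_apply])

end LinearAlgebra

section DirectionalDerivative

variable {R σ : Type*} [CommSemiring R] [Fintype σ]

noncomputable def dirDeriv (z v : σ → R) (P : MvPolynomial σ R) : R :=
  ∑ k, v k * aeval z (pderiv k P)

theorem dirDeriv_mul (z v : σ → R) (P Q : MvPolynomial σ R) :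
    dirDeriv z v (P * Q) = dirDeriv z v P * aeval z Q + aeval z P * dirDeriv z v Q := by
  simp only [dirDeriv, Derivation.leibniz, map_add, map_mul, smul_eq_mul, mul_add,
    Finset.sum_add_distrib, Finset.sum_mul, Finset.mul_sum]
  rw [add_comm]
  congr 1 <;> exact Finset.sum_congr rfl fun k _ => by ring

theorem dirDeriv_pow (z v : σ → R) (P : MvPolynomial σ R) (e : ℕ) :
    dirDeriv z v (P ^ e) = e * aeval z P ^ (e - 1) * dirDeriv z v P := by
  induction e with
  | zero => simp [dirDeriv]
  | succ e ih =>
    rcases e with _ | e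
    · simp
    · rw [pow_succ, dirDeriv_mul, ih, map_pow]
      push_cast
      ring

variable [DecidableEq σ]

noncomputable def linPoly (f : (σ → R) →ₗ[R] R) : MvPolynomial σ R :=
  ∑ k, C (f (Pi.single k 1)) * X k

theorem isHomogeneous_linPoly (f : (σ → R) →ₗ[R] R) : (linPoly f).IsHomogeneous 1 :=
  IsHomogeneous.sum _ _ _ fun _ _ => isHomogeneous_C_mul_X _ _

theorem LinearMap.sum_mul_apply_single (f : (σ → R) →ₗ[R] R) (z : σ → R) :
    ∑ k, z k * f (Pi.single k 1) = f z := by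
  have := LinearMap.congr_fun (LinearEquiv.symm_apply_apply (LinearEquiv.piRing R R σ R) f) z
  rwa [LinearEquiv.piRing_symm_apply] at this

theorem aeval_linPoly (f : (σ → R) →ₗ[R] R) (z : σ → R) : aeval z (linPoly f) = f z := by
  simp [linPoly, ← f.sum_mul_apply_single z, mul_comm]

theorem dirDeriv_linPoly (z v : σ → R) (f : (σ → R) →ₗ[R] R) :
    dirDeriv z v (linPoly f) = f v := by
  simp [dirDeriv, linPoly, ← f.sum_mul_apply_single v, pderiv_X, Pi.single_apply]

end DirectionalDerivative

section Coordinates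

variable {R σ ι : Type*} [CommRing R] [Fintype σ] [DecidableEq σ]
  (B : Module.Basis ι R (σ → R))

noncomputable def coordPoly (j : ι) : MvPolynomial σ R := linPoly (B.coord j)

theorem aeval_coordPoly (z : σ → R) (j : ι) : aeval z (coordPoly B j) = B.repr z j :=
  aeval_linPoly _ z

theorem dirDeriv_coordPoly (z v : σ → R) (j : ι) : dirDeriv z v (coordPoly B j) = B.repr v j :=
  dirDeriv_linPoly z v _

theorem isHomogeneous_coordPoly (j : ι) : (coordPoly B j).IsHomogeneous 1 :=
  isHomogeneous_linPoly _

theorem isHomogeneous_coordPoly_pow_mul {d : ℕ} (hd : 1 ≤ d) (p k : ι) :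
    (coordPoly B p ^ (d - 1) * coordPoly B k).IsHomogeneous d := by
  have h := ((isHomogeneous_coordPoly B p).pow (d - 1)).mul (isHomogeneous_coordPoly B k)
  rwa [show 1 * (d - 1) + 1 = d by omega] at h

theorem isHomogeneous_coordPoly_pow_mul_mul {d : ℕ} (hd : 2 ≤ d) (a b j : ι) :
    (coordPoly B a ^ (d - 2) * coordPoly B b * coordPoly B j).IsHomogeneous d := by
  have h := (((isHomogeneous_coordPoly B a).pow (d - 2)).mul (isHomogeneous_coordPoly B b)).mul
    (isHomogeneous_coordPoly B j)
  rwa [show 1 * (d - 2) + 1 + 1 = d by omega] at h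

variable [DecidableEq ι]

noncomputable def basisJetCoord (p q : ι) (P : MvPolynomial σ R) : R :=
  if q = p then aeval (B p) P else dirDeriv (B p) (B q) P

theorem basisJetCoord_coordPoly_pow_mul {d : ℕ} (hd : 3 ≤ d) (p q p' k : ι) :
    basisJetCoord B p q (coordPoly B p' ^ (d - 1) * coordPoly B k) =
      if (p', k) = (p, q) then 1 else 0 := by
  have h1 : (0 : R) ^ (d - 1) = 0 := zero_pow (by omega)
  have h2 : (0 : R) ^ (d - 1 - 1) = 0 := zero_pow (by omega)
  unfold basisJetCoord
  simp only [dirDeriv_mul, dirDeriv_pow, map_mul, map_pow, aeval_coordPoly, dirDeriv_coordPoly,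
    Module.Basis.repr_self, Finsupp.single_apply, Prod.mk.injEq]
  split_ifs <;> simp [h1, h2] at * <;> grind

theorem basisJetCoord_coordPoly_pow_mul_mul {d : ℕ} (hd : 3 ≤ d) {a b j : ι} (hab : a ≠ b)
    (hja : j ≠ a) (hjb : j ≠ b) (p q : ι) :
    basisJetCoord B p q (coordPoly B a ^ (d - 2) * coordPoly B b * coordPoly B j) = 0 := by
  have hd1 : d - 2 ≠ 0 := by omega
  unfold basisJetCoord
  simp only [dirDeriv_mul, dirDeriv_pow, map_mul, map_pow, aeval_coordPoly, dirDeriv_coordPoly,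
    Module.Basis.repr_self, Finsupp.single_apply]
  split_ifs <;> simp [zero_pow hd1] at * <;> grind

theorem dirDeriv_coordPoly_pow_mul_mul {d : ℕ} {a b j q : ι} (hqa : q ≠ a) (hqb : q ≠ b)
    (w : σ → R) :
    dirDeriv w (B q) (coordPoly B a ^ (d - 2) * coordPoly B b * coordPoly B j) =
      if j = q then B.repr w a ^ (d - 2) * B.repr w b else 0 := by
  simp only [dirDeriv_mul, dirDeriv_pow, map_mul, map_pow, aeval_coordPoly, dirDeriv_coordPoly,
    Module.Basis.repr_self, Finsupp.single_apply]
  split_ifs <;> simp at * <;> grind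

end Coordinates

section Jets

variable {F : Type*} [Field F] {n d : ℕ} {Z : Finset (Fin (n + 1) → F)}

noncomputable def jetValueAt (z : Z) : (Z → F × (Fin (n + 1) → F)) →ₗ[F] F :=
  LinearMap.fst F F _ ∘ₗ LinearMap.proj z

noncomputable def jetSlopeAt (z : Z) (v : Fin (n + 1) → F) :
    (Z → F × (Fin (n + 1) → F)) →ₗ[F] F :=
  Fintype.linearCombination F v ∘ₗ LinearMap.snd F F _ ∘ₗ LinearMap.proj z

theorem jetValueAt_jetMap (z : Z) (P : homogeneousSubmodule (Fin (n + 1)) F d) :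
    jetValueAt z (jetMap F n d Z P) = aeval (z : Fin (n + 1) → F) (P : MvPolynomial _ F) := by
  simp [jetValueAt, jetMap, jetL]

theorem jetSlopeAt_jetMap (z : Z) (v : Fin (n + 1) → F)
    (P : homogeneousSubmodule (Fin (n + 1)) F d) :
    jetSlopeAt z v (jetMap F n d Z P) =
      dirDeriv (z : Fin (n + 1) → F) v (P : MvPolynomial _ F) := by
  simp [jetSlopeAt, jetMap, jetL, dirDeriv, Fintype.linearCombination_apply, mul_comm]

theorem card_mul_card_add_le_finrank_quotient_ker_jetMap {ι : Type*} [Fintype ι]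
    [DecidableEq ι] (hd : 3 ≤ d) (B : Module.Basis ι F (Fin (n + 1) → F)) (S : Finset ι)
    (hS : ∀ p ∈ S, B p ∈ Z) {w : Fin (n + 1) → F} (hw : w ∈ Z) {a b : ι} (hab : a ≠ b)
    (ha : B.repr w a ≠ 0) (hb : B.repr w b ≠ 0) :
    S.card * Fintype.card ι + (Fintype.card ι - 2) ≤
      Module.finrank F
        (homogeneousSubmodule (Fin (n + 1)) F d ⧸ LinearMap.ker (jetMap F n d Z)) := by
  let L := coordPoly B
  let u : (S × ι) ⊕ {j // j ≠ a ∧ j ≠ b} → homogeneousSubmodule (Fin (n + 1)) F d :=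
    Sum.elim
      (fun x => ⟨L x.1 ^ (d - 1) * L x.2, isHomogeneous_coordPoly_pow_mul B (by omega) _ _⟩)
      (fun j => ⟨L a ^ (d - 2) * L b * L j,
        isHomogeneous_coordPoly_pow_mul_mul B (by omega) _ _ _⟩)
  let φ : (S × ι) ⊕ {j // j ≠ a ∧ j ≠ b} →
      (Z → F × (Fin (n + 1) → F)) →ₗ[F] F :=
    Sum.elim
      (fun x => if x.2 = x.1 then jetValueAt ⟨B x.1, hS _ x.1.2⟩
        else jetSlopeAt ⟨B x.1, hS _ x.1.2⟩ (B x.2))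
      (fun j => jetSlopeAt ⟨w, hw⟩ (B j))
  have hφ : ∀ (x : S × ι) P,
      φ (.inl x) (jetMap F n d Z P) = basisJetCoord B x.1 x.2 P := by
    intro x P
    simp only [φ, Sum.elim_inl, basisJetCoord]
    split_ifs <;> simp [jetValueAt_jetMap, jetSlopeAt_jetMap]
  have hψ : ∀ (j : {j // j ≠ a ∧ j ≠ b}) P,
      φ (.inr j) (jetMap F n d Z P) = dirDeriv w (B j) P :=
    fun j P => jetSlopeAt_jetMap _ _ P
  have hli : LinearIndependent F (jetMap F n d Z ∘ u) := by
    refine linearIndependent_of_triangular φ Sum.isRight ?_ ?_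
    · rintro (x | j)
      · simp [u, hφ, L, basisJetCoord_coordPoly_pow_mul B hd]
      · simp [u, hψ, L, dirDeriv_coordPoly_pow_mul_mul B j.2.1 j.2.2, ha, hb]
    · rintro (x | j) (y | k) hne hle
      · have hyx : y ≠ x := fun h => hne (h ▸ rfl)
        simpa [u, hφ, L, basisJetCoord_coordPoly_pow_mul B hd] using
          fun h1 h2 => hyx (Prod.ext (Subtype.ext h1) h2)
      · simp [u, hφ, L, basisJetCoord_coordPoly_pow_mul_mul B hd hab k.2.1 k.2.2]
      · exact absurd hle (by simp)
      · have hkj : k ≠ j := fun h => hne (h ▸ rfl)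
        simpa [u, hψ, L, dirDeriv_coordPoly_pow_mul_mul B j.2.1 j.2.2] using
          fun h => absurd (Subtype.ext h) hkj
  simpa [Fintype.card_subtype_ne_and_ne hab] using (jetMap F n d Z).card_le_finrank_quotient_ker hli

end Jets

theorem stmt_12_general {F : Type*} [Field F] (n m d : ℕ) (hd : 3 ≤ d)
    (Z : Finset (Fin (n + 1) → F))
    (hZd : ∀ z ∈ Z, ∀ w ∈ Z, z ≠ w → ∀ c : F, c • z ≠ w)
    (hcard : m + 2 ≤ Z.card)
    (hhull : Module.finrank F
      (Submodule.span F (↑Z : Set (Fin (n + 1) → F))) = m + 1) :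
    (m + 1) * (n + 1) + n - 1 ≤
      Module.finrank F
        (↥(MvPolynomial.homogeneousSubmodule (Fin (n + 1)) F d) ⧸
          LinearMap.ker (jetMap F n d Z)) := by
  classical
  obtain ⟨ι, _, B, S, hSZ, hS, hZS⟩ := Z.exists_basis_image_subset_spanning (K := F)
  rw [hhull] at hS
  have hι : Fintype.card ι = n + 1 := by simpa using (Module.finrank_eq_card_basis B).symm
  obtain ⟨w, hwZ, hwS⟩ := Finset.exists_mem_notMem_of_card_lt_card (s := S.image B) (t := Z)
    (by have := S.card_image_le (f := B); omega)
  obtain ⟨a, b, hab, ha, hb⟩ := B.exists_pair_repr_ne_zero (S := S)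
    (Finset.card_pos.mp (by omega)) (hZS w hwZ) fun j hj c =>
      hZd _ (hSZ j hj) w hwZ (fun h => hwS (h ▸ Finset.mem_image_of_mem B hj)) c
  have := card_mul_card_add_le_finrank_quotient_ker_jetMap hd B S hSZ hwZ hab ha hb
  rw [hS, hι] at this
  omega

/-- Let `d ≥ 3` and let `Z ⊆ ℙ^n` be a reduced zero-dimensional
subscheme (nonzero, pairwise non-proportional vectors) with `|Z| ≥ m + 2` whose
projective hull is `m`-dimensional (i.e. the span of the representing vectors has
dimension `m + 1`).  Then the kernel of the restriction map
`H^0(ℙ^n, O(d)) → H^0(N(Z), O(d))` has codimension at least `(m+1)(n+1) + n − 1`. -/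
theorem stmt_12 {F : Type*} [Field F] (n m d : ℕ) (hd : 3 ≤ d)
    (Z : Finset (Fin (n + 1) → F))
    (hZ0 : ∀ z ∈ Z, z ≠ 0)
    (hZd : ∀ z ∈ Z, ∀ w ∈ Z, z ≠ w → ∀ c : F, c • z ≠ w)
    (hcard : m + 2 ≤ Z.card)
    (hhull : Module.finrank F
      (Submodule.span F (↑Z : Set (Fin (n + 1) → F))) = m + 1) :
    (m + 1) * (n + 1) + n - 1 ≤
      Module.finrank F
        (↥(MvPolynomial.homogeneousSubmodule (Fin (n + 1)) F d) ⧸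
          LinearMap.ker (jetMap F n d Z)) :=
  stmt_12_general n m d hd Z hZd hcard hhull
end
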